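/- Consider the discrete-time quantum walk search on the n×n torus grid (N = n² vertices, n ≥ 3) with marked set M = {(i,j), (i+1,j)} consisting of two horizontally adjacent vertices. Let ψ(0) be the uniform initial state with all 4N amplitudes equal to 1/√(4N), and let ψ(t) = (U′)^t ψ(0). Then for every t ≥ 0, the probability of finding a marked vertex p_M(t) = Σ_{(x,y)∈M} Σ_c |ψ(t)(x,y,c)|² satisfies p_M(t) ≤ (8√3 + 14)/N; in particular p_M(t) = O(1/N). -/

import Mathlib

/-- Discrete-time quantum walk search on the `n × n` torus grid.
Basis states are `((x, y), c)` with coin directions `0 = ↑`, `1 = ↓`, `2 = ←`, `3 = →`.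
`flip` sends a dart to the reversed dart at the adjacent vertex (flip-flop structure). -/
noncomputable def GridWalk.flip (n : ℕ) [NeZero n] (e : (Fin n × Fin n) × Fin 4) :
    (Fin n × Fin n) × Fin 4 :=
  if e.2 = 0 then ((e.1.1, e.1.2 + 1), 1)
  else if e.2 = 1 then ((e.1.1, e.1.2 - 1), 0)
  else if e.2 = 2 then ((e.1.1 - 1, e.1.2), 3)
  else ((e.1.1 + 1, e.1.2), 2)

/-- The flip-flop shift operator `S`. -/
noncomputable def GridWalk.shift (n : ℕ) [NeZero n] (ψ : (Fin n × Fin n) × Fin 4 → ℂ) :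
    (Fin n × Fin n) × Fin 4 → ℂ :=
  fun e => ψ (GridWalk.flip n e)

/-- The Grover coin `I ⊗ C`. -/
noncomputable def GridWalk.coin (n : ℕ) (ψ : (Fin n × Fin n) × Fin 4 → ℂ) :
    (Fin n × Fin n) × Fin 4 → ℂ :=
  fun e => (1 / 2 : ℂ) * (∑ c' : Fin 4, ψ (e.1, c')) - ψ e

/-- The query `Q ⊗ I`, flipping the sign at marked vertices. -/
noncomputable def GridWalk.query (n : ℕ) (M : Finset (Fin n × Fin n))
    (ψ : (Fin n × Fin n) × Fin 4 → ℂ) : (Fin n × Fin n) × Fin 4 → ℂ :=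
  fun e => if e.1 ∈ M then -ψ e else ψ e

/-- One step of the search algorithm, `U' = S · (I ⊗ C) · (Q ⊗ I)`. -/
noncomputable def GridWalk.step (n : ℕ) [NeZero n] (M : Finset (Fin n × Fin n))
    (ψ : (Fin n × Fin n) × Fin 4 → ℂ) : (Fin n × Fin n) × Fin 4 → ℂ :=
  GridWalk.shift n (GridWalk.coin n (GridWalk.query n M ψ))

/-!
Let `α` be the amplitude of the uniform state. The state `φ` equal to `α` everywhere except
`-3α` on the two darts of the marked edge is fixed by `U'`: at a marked vertex the query turns
`(α, α, α, -3α)` into `(-α, -α, -α, 3α)`, the Grover coin maps this back to `(α, α, α, -3α)`,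
and the flip-flop shift swaps the two marked-edge darts with each other. Since `U'` is
additive and unitary, `ψ(t) = φ + U'^t (ψ(0) - φ)` with `‖U'^t (ψ(0) - φ)‖² = ‖ψ(0) - φ‖² = 32|α|²`,
while `φ` has mass `24|α|²` on the marked vertices. The triangle inequality on the marked
vertices gives `p_M(t) ≤ (√24 + √32)² |α|² = (56 + 32√3)|α|²`, and `|α|² = 1/(4N)`.
-/

open Finset

theorem Finset.sum_norm_add_sq_le {ι E : Type*} [SeminormedAddCommGroup E] (s : Finset ι)
    (f g : ι → E) :
    ∑ i ∈ s, ‖f i + g i‖ ^ 2 ≤ (√(∑ i ∈ s, ‖f i‖ ^ 2) + √(∑ i ∈ s, ‖g i‖ ^ 2)) ^ 2 := by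
  have hf := Real.sq_sqrt (sum_nonneg fun i (_ : i ∈ s) => sq_nonneg ‖f i‖)
  have hg := Real.sq_sqrt (sum_nonneg fun i (_ : i ∈ s) => sq_nonneg ‖g i‖)
  calc ∑ i ∈ s, ‖f i + g i‖ ^ 2 ≤ ∑ i ∈ s, (‖f i‖ + ‖g i‖) ^ 2 :=
        sum_le_sum fun i _ => pow_le_pow_left₀ (norm_nonneg _) (norm_add_le _ _) 2
    _ = ∑ i ∈ s, ‖f i‖ ^ 2 + 2 * ∑ i ∈ s, ‖f i‖ * ‖g i‖ + ∑ i ∈ s, ‖g i‖ ^ 2 := by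
        simp only [add_sq, sum_add_distrib, mul_sum, mul_assoc]
    _ ≤ ∑ i ∈ s, ‖f i‖ ^ 2 + 2 * (√(∑ i ∈ s, ‖f i‖ ^ 2) * √(∑ i ∈ s, ‖g i‖ ^ 2))
          + ∑ i ∈ s, ‖g i‖ ^ 2 := by
        gcongr
        exact Real.sum_mul_le_sqrt_mul_sqrt s _ _
    _ = (√(∑ i ∈ s, ‖f i‖ ^ 2) + √(∑ i ∈ s, ‖g i‖ ^ 2)) ^ 2 := by
        rw [add_sq, hf, hg]
        ring

theorem Complex.sum_norm_sq_grover (v : Fin 4 → ℂ) :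
    ∑ c, ‖(1 / 2 : ℂ) * (∑ c', v c') - v c‖ ^ 2 = ∑ c, ‖v c‖ ^ 2 := by
  simp only [Fin.sum_univ_four, Complex.sq_norm, Complex.normSq_apply, Complex.sub_re,
    Complex.sub_im, Complex.mul_re, Complex.mul_im, Complex.add_re, Complex.add_im]
  norm_num
  ring

namespace GridWalk

variable {n : ℕ}

theorem sum_norm_sq_coin (ψ : (Fin n × Fin n) × Fin 4 → ℂ) :
    ∑ e, ‖coin n ψ e‖ ^ 2 = ∑ e, ‖ψ e‖ ^ 2 := by
  simp only [Fintype.sum_prod_type (f := fun e => ‖coin n ψ e‖ ^ 2),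
    Fintype.sum_prod_type (f := fun e => ‖ψ e‖ ^ 2)]
  exact sum_congr rfl fun v _ => Complex.sum_norm_sq_grover fun c => ψ (v, c)

theorem sum_norm_sq_query (M : Finset (Fin n × Fin n)) (ψ : (Fin n × Fin n) × Fin 4 → ℂ) :
    ∑ e, ‖query n M ψ e‖ ^ 2 = ∑ e, ‖ψ e‖ ^ 2 := by
  refine sum_congr rfl fun e _ => ?_
  by_cases h : e.1 ∈ M <;> simp [query, h]

variable [NeZero n]

theorem flip_involutive : Function.Involutive (flip n) := by
  rintro ⟨⟨x, y⟩, c⟩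
  fin_cases c <;> simp [flip]

theorem sum_norm_sq_shift (ψ : (Fin n × Fin n) × Fin 4 → ℂ) :
    ∑ e, ‖shift n ψ e‖ ^ 2 = ∑ e, ‖ψ e‖ ^ 2 :=
  Equiv.sum_comp (flip_involutive.toPerm _) fun e => ‖ψ e‖ ^ 2

theorem sum_norm_sq_step (M : Finset (Fin n × Fin n)) (ψ : (Fin n × Fin n) × Fin 4 → ℂ) :
    ∑ e, ‖step n M ψ e‖ ^ 2 = ∑ e, ‖ψ e‖ ^ 2 := by
  rw [step, sum_norm_sq_shift, sum_norm_sq_coin, sum_norm_sq_query]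

theorem sum_norm_sq_iterate_step (M : Finset (Fin n × Fin n))
    (ψ : (Fin n × Fin n) × Fin 4 → ℂ) (t : ℕ) :
    ∑ e, ‖(step n M)^[t] ψ e‖ ^ 2 = ∑ e, ‖ψ e‖ ^ 2 := by
  induction t with
  | zero => rfl
  | succ t ih => rw [Function.iterate_succ_apply', sum_norm_sq_step, ih]

theorem step_add (M : Finset (Fin n × Fin n)) (ψ χ : (Fin n × Fin n) × Fin 4 → ℂ) :
    step n M (ψ + χ) = step n M ψ + step n M χ := by
  funext e
  simp only [step, shift, coin, query, Pi.add_apply]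
  split_ifs <;> simp only [sum_add_distrib, sum_neg_distrib, neg_add] <;> ring

noncomputable def stepHom (M : Finset (Fin n × Fin n)) :
    ((Fin n × Fin n) × Fin 4 → ℂ) →+ ((Fin n × Fin n) × Fin 4 → ℂ) :=
  AddMonoidHom.mk' (step n M) (step_add M)

theorem iterate_step_eq_add_of_step_eq {M : Finset (Fin n × Fin n)}
    {φ : (Fin n × Fin n) × Fin 4 → ℂ} (hφ : step n M φ = φ) (ψ : (Fin n × Fin n) × Fin 4 → ℂ)
    (t : ℕ) : (step n M)^[t] ψ = φ + (step n M)^[t] (ψ - φ) := by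
  have h := iterate_map_add (stepHom M) t φ (ψ - φ)
  rwa [add_sub_cancel, show ⇑(stepHom M) = step n M from rfl,
    Function.iterate_fixed hφ] at h

noncomputable def stationaryState (i j : Fin n) (α : ℂ) : (Fin n × Fin n) × Fin 4 → ℂ :=
  fun e => if e = ((i, j), 3) ∨ e = ((i + 1, j), 2) then -3 * α else α

variable {i : Fin n}

theorem stationaryState_flip (j : Fin n) (α : ℂ) (e : (Fin n × Fin n) × Fin 4) :
    stationaryState i j α (flip n e) = stationaryState i j α e := by
  obtain ⟨⟨x, y⟩, c⟩ := e
  fin_cases c <;> simp [flip, stationaryState, Prod.ext_iff, sub_eq_iff_eq_add]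

theorem sum_stationaryState_of_mem (hi : i ≠ i + 1) {j : Fin n} {α : ℂ} {v : Fin n × Fin n}
    (hv : v ∈ ({(i, j), (i + 1, j)} : Finset (Fin n × Fin n))) :
    ∑ c, stationaryState i j α (v, c) = 0 := by
  rcases mem_insert.mp hv with rfl | hv
  · simp [Fin.sum_univ_four, stationaryState, Prod.ext_iff, hi]
    ring
  · rw [mem_singleton.mp hv]
    simp [Fin.sum_univ_four, stationaryState, Prod.ext_iff, hi.symm]
    ring

theorem stationaryState_of_notMem {j : Fin n} {α : ℂ} {v : Fin n × Fin n}
    (hv : v ∉ ({(i, j), (i + 1, j)} : Finset (Fin n × Fin n))) (c : Fin 4) :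
    stationaryState i j α (v, c) = α := by
  simp only [mem_insert, mem_singleton, not_or] at hv
  simp [stationaryState, hv.1, hv.2]

theorem coin_query_stationaryState (hi : i ≠ i + 1) (j : Fin n) (α : ℂ) :
    coin n (query n {(i, j), (i + 1, j)} (stationaryState i j α)) = stationaryState i j α := by
  funext ⟨v, c⟩
  by_cases hv : v ∈ ({(i, j), (i + 1, j)} : Finset (Fin n × Fin n))
  · simp only [coin, query, hv, if_true, sum_neg_distrib, sum_stationaryState_of_mem hi hv]
    ring
  · simp only [coin, query, hv, if_false, stationaryState_of_notMem hv, sum_const, card_univ,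
      Fintype.card_fin]
    ring

theorem step_stationaryState (hi : i ≠ i + 1) (j : Fin n) (α : ℂ) :
    step n {(i, j), (i + 1, j)} (stationaryState i j α) = stationaryState i j α := by
  funext e
  rw [step, shift, coin_query_stationaryState hi, stationaryState_flip]

theorem sum_norm_sq_stationaryState_marked (hi : i ≠ i + 1) (j : Fin n) (α : ℂ) :
    ∑ v ∈ ({(i, j), (i + 1, j)} : Finset (Fin n × Fin n)), ∑ c, ‖stationaryState i j α (v, c)‖ ^ 2
      = 24 * ‖α‖ ^ 2 := by
  rw [sum_pair (by simp [Prod.ext_iff, hi])]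
  simp [Fin.sum_univ_four, stationaryState, Prod.ext_iff, hi, hi.symm]
  ring

theorem sum_norm_sq_const_sub_stationaryState (j : Fin n) (α : ℂ) :
    ∑ e, ‖α - stationaryState i j α e‖ ^ 2 = 32 * ‖α‖ ^ 2 := by
  rw [← sum_subset (subset_univ {((i, j), 3), ((i + 1, j), 2)}), sum_pair (by simp)]
  · simp [stationaryState, ← two_mul]
    rw [show α + 3 * α = 4 * α by ring, norm_mul]
    norm_num
    ring
  · intro e _ he
    simp only [mem_insert, mem_singleton, not_or] at he
    simp [stationaryState, he.1, he.2]

theorem sum_norm_sq_iterate_step_const_marked_le (hi : i ≠ i + 1) (j : Fin n) (α : ℂ) (t : ℕ) :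
    ∑ v ∈ ({(i, j), (i + 1, j)} : Finset (Fin n × Fin n)), ∑ c,
        ‖(step n {(i, j), (i + 1, j)})^[t] (fun _ => α) (v, c)‖ ^ 2
      ≤ (56 + 32 * √3) * ‖α‖ ^ 2 := by
  set M : Finset (Fin n × Fin n) := {(i, j), (i + 1, j)}
  set φ := stationaryState i j α
  set d := (step n M)^[t] ((fun _ => α) - φ)
  have hd : ∑ p ∈ M ×ˢ univ, ‖d p‖ ^ 2 ≤ 32 * ‖α‖ ^ 2 := calc
    _ ≤ ∑ p, ‖d p‖ ^ 2 := sum_le_univ_sum_of_nonneg fun p => sq_nonneg _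
    _ = 32 * ‖α‖ ^ 2 := by
      rw [sum_norm_sq_iterate_step]
      exact sum_norm_sq_const_sub_stationaryState j α
  have hφ : ∑ p ∈ M ×ˢ univ, ‖φ p‖ ^ 2 = 24 * ‖α‖ ^ 2 := by
    rw [sum_product (f := fun p => ‖φ p‖ ^ 2)]
    exact sum_norm_sq_stationaryState_marked hi j α
  have hcross : √(24 * ‖α‖ ^ 2) * √(32 * ‖α‖ ^ 2) = 16 * √3 * ‖α‖ ^ 2 := by
    rw [← Real.sqrt_mul (by positivity), show 24 * ‖α‖ ^ 2 * (32 * ‖α‖ ^ 2)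
      = (16 * ‖α‖ ^ 2) ^ 2 * 3 by ring, Real.sqrt_mul (by positivity), Real.sqrt_sq (by positivity)]
    ring
  rw [iterate_step_eq_add_of_step_eq (step_stationaryState hi j α), ← sum_product']
  calc ∑ p ∈ M ×ˢ univ, ‖(φ + d) p‖ ^ 2
      ≤ (√(∑ p ∈ M ×ˢ univ, ‖φ p‖ ^ 2) + √(∑ p ∈ M ×ˢ univ, ‖d p‖ ^ 2)) ^ 2 :=
        sum_norm_add_sq_le _ φ d
    _ ≤ (√(24 * ‖α‖ ^ 2) + √(32 * ‖α‖ ^ 2)) ^ 2 := by rw [hφ]; gcongr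
    _ = (56 + 32 * √3) * ‖α‖ ^ 2 := by
        rw [add_sq, mul_assoc 2, hcross, Real.sq_sqrt (by positivity), Real.sq_sqrt (by positivity)]
        ring

end GridWalk

/-- For two horizontally adjacent marked vertices `(i, j)` and `(i+1, j)` on the `n × n`
torus grid (`N = n²`), the probability of finding a marked vertex after any number of
steps of the search algorithm, starting from the uniform state, is at most
`(8√3 + 14)/N`; in particular it is `O(1/N)`. -/
theorem grid_two_adjacent_marked_prob_bound (n : ℕ) [NeZero n] (hn : 3 ≤ n)
    (i j : Fin n) :
    ∀ t : ℕ,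
      ∑ v ∈ ({(i, j), (i + 1, j)} : Finset (Fin n × Fin n)), ∑ c : Fin 4,
        ‖(GridWalk.step n {(i, j), (i + 1, j)})^[t]
            (fun _ => ((1 / Real.sqrt (4 * n ^ 2) : ℝ) : ℂ)) (v, c)‖ ^ 2
      ≤ (8 * Real.sqrt 3 + 14) / (n ^ 2 : ℝ) := by
  intro t
  have hi : i ≠ i + 1 := fun h =>
    (by omega : n ≠ 1) (Fin.one_eq_zero_iff.mp (left_eq_add.mp h))
  have hα : ‖((1 / Real.sqrt (4 * n ^ 2) : ℝ) : ℂ)‖ ^ 2 = 1 / (4 * n ^ 2) := by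
    rw [Complex.norm_real, Real.norm_eq_abs, sq_abs, div_pow, one_pow,
      Real.sq_sqrt (by positivity)]
  have hn0 : (n : ℝ) ≠ 0 := by positivity
  calc _ ≤ (56 + 32 * √3) * ‖((1 / Real.sqrt (4 * n ^ 2) : ℝ) : ℂ)‖ ^ 2 :=
        GridWalk.sum_norm_sq_iterate_step_const_marked_le hi j _ t
    _ = (8 * Real.sqrt 3 + 14) / (n ^ 2 : ℝ) := by
        rw [hα]
        field_simp
        ring
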